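/- arXiv:quant-ph/0603190 — 2 statements merged into one kernel-verified Lean document; each statement's English description precedes it below -/
import Mathlib

section
/- With W_ζ and Ŵ_ζ as the spans of λ_{ij} and λ̂_{ij} over pairs {i,j} with i XOR j = ζ, and C the space of diagonal traceless matrices, one has [W_ζ, C] ⊆ Ŵ_ζ, [Ŵ_ζ, C] ⊆ W_ζ, and [W_ζ, Ŵ_ζ] ⊆ C for every nonzero ζ ∈ (Z/2Z)^p. -/
open Matrix

/-- `λ_{ij} = E_{ij} + E_{ji}`, indices identified with `(ℤ/2ℤ)^p`. -/
noncomputable def lam {p : ℕ} (i j : Fin p → ZMod 2) :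
    Matrix (Fin p → ZMod 2) (Fin p → ZMod 2) ℂ :=
  single i j 1 + single j i 1

/-- `λ̂_{ij} = -i·E_{ij} + i·E_{ji}` (so `λ̂_{ij} = -λ̂_{ji}`). -/
noncomputable def lamHat {p : ℕ} (i j : Fin p → ZMod 2) :
    Matrix (Fin p → ZMod 2) (Fin p → ZMod 2) ℂ :=
  (-Complex.I) • single i j 1 + Complex.I • single j i 1

/-- `W_ζ`: span of the `λ_{ij}` over pairs with `i XOR j = ζ`. -/
noncomputable def W {p : ℕ} (ζ : Fin p → ZMod 2) :
    Submodule ℂ (Matrix (Fin p → ZMod 2) (Fin p → ZMod 2) ℂ) :=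
  Submodule.span ℂ {A | ∃ i j, i + j = ζ ∧ A = lam i j}

/-- `Ŵ_ζ`: span of the `λ̂_{ij}` over pairs with `i XOR j = ζ`. -/
noncomputable def What {p : ℕ} (ζ : Fin p → ZMod 2) :
    Submodule ℂ (Matrix (Fin p → ZMod 2) (Fin p → ZMod 2) ℂ) :=
  Submodule.span ℂ {A | ∃ i j, i + j = ζ ∧ A = lamHat i j}

/-!
Index matrices by `(ℤ/2ℤ)^p` and call `M` `ζ`-shifted when `M a b ≠ 0` only for `a + ζ = b`.
Shifts add under multiplication, the `0`-shifted matrices are the diagonal ones, and `W_ζ`, `Ŵ_ζ`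
are `ζ`-shifted; as `ζ + ζ = 0`, the products in `[W_ζ, Ŵ_ζ]` are diagonal, and a commutator is
traceless. Commuting `E_ij` past `diagonal d` scales it by `d_j - d_i`, which turns `λ_ij` into a
multiple of `λ̂_ij` and back.
-/

section ShiftSupported

variable {G R : Type*} [Semiring R]

def shiftSupported [Add G] (ζ : G) : Submodule R (Matrix G G R) where
  carrier := {M | ∀ a b, a + ζ ≠ b → M a b = 0}
  add_mem' hM hN a b h := by simp [hM a b h, hN a b h]
  zero_mem' _ _ _ := rfl
  smul_mem' c M hM a b h := by simp [hM a b h]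

theorem mem_shiftSupported [Add G] {ζ : G} {M : Matrix G G R} :
    M ∈ shiftSupported ζ ↔ ∀ a b, a + ζ ≠ b → M a b = 0 :=
  Iff.rfl

theorem mem_shiftSupported_zero_iff_isDiag [AddZeroClass G] {M : Matrix G G R} :
    M ∈ shiftSupported (0 : G) ↔ M.IsDiag := by
  simp only [mem_shiftSupported, add_zero]
  rfl

theorem single_mem_shiftSupported [Add G] [DecidableEq G] {ζ i j : G} (h : i + ζ = j) (c : R) :
    single i j c ∈ shiftSupported ζ := by
  rintro a b hab
  rw [single_apply, if_neg]
  rintro ⟨rfl, rfl⟩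
  exact hab h

theorem mul_mem_shiftSupported [AddSemigroup G] [Fintype G] {ζ η : G} {M N : Matrix G G R}
    (hM : M ∈ shiftSupported ζ) (hN : N ∈ shiftSupported η) :
    M * N ∈ shiftSupported (ζ + η) := by
  intro a c hac
  refine Finset.sum_eq_zero fun b _ => ?_
  by_cases hab : a + ζ = b
  · show M a b * N b c = 0
    rw [hN b c (by rwa [← hab, add_assoc]), mul_zero]
  · show M a b * N b c = 0
    rw [hM a b hab, zero_mul]

end ShiftSupported

theorem single_sub {m n α : Type*} [DecidableEq m] [DecidableEq n] [AddCommGroup α] (i : m) (j : n)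
    (a b : α) :
    single i j (a - b) = single i j a - single i j b :=
  map_sub (singleAddMonoidHom i j) a b

section Diagonal

variable {n R : Type*} [Fintype n] [DecidableEq n] [Semiring R]

theorem single_mul_diagonal (i j : n) (c : R) (d : n → R) :
    single i j c * diagonal d = single i j (c * d j) := by
  ext a b
  by_cases h : a = i ∧ b = j <;> aesop (add simp [single_apply])

theorem diagonal_mul_single (i j : n) (c : R) (d : n → R) :
    diagonal d * single i j c = single i j (d i * c) := by
  ext a b
  by_cases h : a = i ∧ b = j <;> aesop (add simp [single_apply])

end Diagonal

theorem commutator_mem_of_mem_span {R A : Type*} [CommSemiring R] [Ring A] [Algebra R A]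
    {s : Set A} {P : Submodule R A} (D : A) (hs : ∀ x ∈ s, x * D - D * x ∈ P) {x : A}
    (hx : x ∈ Submodule.span R s) : x * D - D * x ∈ P :=
  (Submodule.span_le (p := P.comap (LinearMap.mulRight R D - LinearMap.mulLeft R D))).mpr hs hx

theorem trace_commutator {n R : Type*} [Fintype n] [CommRing R] (A B : Matrix n n R) :
    (A * B - B * A).trace = 0 := by
  rw [trace_sub, trace_mul_comm, sub_self]

section ConjugatePair

variable {p : ℕ}

theorem zmod_two_pi_add_self (x : Fin p → ZMod 2) : x + x = 0 :=
  funext fun t => CharTwo.add_self_eq_zero (x t)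

theorem single_mem_shiftSupported_add (i j : Fin p → ZMod 2) (c : ℂ) :
    single i j c ∈ shiftSupported (i + j) :=
  single_mem_shiftSupported (by rw [← add_assoc, zmod_two_pi_add_self, zero_add]) c

theorem W_le_shiftSupported (ζ : Fin p → ZMod 2) : W ζ ≤ shiftSupported ζ := by
  refine Submodule.span_le.mpr ?_
  rintro _ ⟨i, j, rfl, rfl⟩
  exact add_mem (single_mem_shiftSupported_add i j 1)
    (add_comm j i ▸ single_mem_shiftSupported_add j i 1)

theorem What_le_shiftSupported (ζ : Fin p → ZMod 2) : What ζ ≤ shiftSupported ζ := by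
  refine Submodule.span_le.mpr ?_
  rintro _ ⟨i, j, rfl, rfl⟩
  exact add_mem (Submodule.smul_mem _ _ (single_mem_shiftSupported_add i j 1))
    (Submodule.smul_mem _ _ (add_comm j i ▸ single_mem_shiftSupported_add j i 1))

theorem lam_mul_diagonal_sub (d : (Fin p → ZMod 2) → ℂ) (i j : Fin p → ZMod 2) :
    lam i j * diagonal d - diagonal d * lam i j = ((d j - d i) * Complex.I) • lamHat i j := by
  simp only [lam, lamHat, add_mul, mul_add, single_mul_diagonal, diagonal_mul_single, one_mul,
    mul_one, smul_add, smul_single, smul_eq_mul]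
  rw [add_sub_add_comm, ← single_sub, ← single_sub]
  congr 2
  · linear_combination (d j - d i) * Complex.I_sq
  · linear_combination (d i - d j) * Complex.I_sq

theorem lamHat_mul_diagonal_sub (d : (Fin p → ZMod 2) → ℂ) (i j : Fin p → ZMod 2) :
    lamHat i j * diagonal d - diagonal d * lamHat i j = (-Complex.I * (d j - d i)) • lam i j := by
  simp only [lamHat, lam, add_mul, mul_add, single_mul_diagonal,
    diagonal_mul_single, mul_one, smul_add, smul_single, smul_eq_mul]
  rw [add_sub_add_comm, ← single_sub, ← single_sub]
  congr 2 <;> ring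

end ConjugatePair

theorem conjugate_pair_center_general {p : ℕ} (ζ : Fin p → ZMod 2) :
    (∀ A ∈ W ζ, ∀ D : Matrix (Fin p → ZMod 2) (Fin p → ZMod 2) ℂ,
      D.IsDiag → D.trace = 0 → A * D - D * A ∈ What ζ) ∧
    (∀ A ∈ What ζ, ∀ D : Matrix (Fin p → ZMod 2) (Fin p → ZMod 2) ℂ,
      D.IsDiag → D.trace = 0 → A * D - D * A ∈ W ζ) ∧
    (∀ A ∈ W ζ, ∀ B ∈ What ζ,
      (A * B - B * A).IsDiag ∧ (A * B - B * A).trace = 0) := by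
  refine ⟨fun A hA D hD _ => ?_, fun A hA D hD _ => ?_, fun A hA B hB => ?_⟩
  · rw [← hD.diagonal_diag]
    refine commutator_mem_of_mem_span _ ?_ hA
    rintro _ ⟨i, j, hij, rfl⟩
    rw [lam_mul_diagonal_sub]
    exact Submodule.smul_mem _ _ (Submodule.subset_span ⟨i, j, hij, rfl⟩)
  · rw [← hD.diagonal_diag]
    refine commutator_mem_of_mem_span _ ?_ hA
    rintro _ ⟨i, j, hij, rfl⟩
    rw [lamHat_mul_diagonal_sub]
    exact Submodule.smul_mem _ _ (Submodule.subset_span ⟨i, j, hij, rfl⟩)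
  · refine ⟨?_, trace_commutator A B⟩
    rw [← mem_shiftSupported_zero_iff_isDiag, ← zmod_two_pi_add_self ζ]
    exact sub_mem (mul_mem_shiftSupported (W_le_shiftSupported ζ hA) (What_le_shiftSupported ζ hB))
      (mul_mem_shiftSupported (What_le_shiftSupported ζ hB) (W_le_shiftSupported ζ hA))

/-- Within a conjugate pair: `[W_ζ, C] ⊆ Ŵ_ζ`, `[Ŵ_ζ, C] ⊆ W_ζ`, and `[W_ζ, Ŵ_ζ] ⊆ C`,
where `C` is the space of diagonal traceless matrices. -/
theorem conjugate_pair_center {p : ℕ} (ζ : Fin p → ZMod 2) (hζ : ζ ≠ 0) :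
    (∀ A ∈ W ζ, ∀ D : Matrix (Fin p → ZMod 2) (Fin p → ZMod 2) ℂ,
      D.IsDiag → D.trace = 0 → A * D - D * A ∈ What ζ) ∧
    (∀ A ∈ What ζ, ∀ D : Matrix (Fin p → ZMod 2) (Fin p → ZMod 2) ℂ,
      D.IsDiag → D.trace = 0 → A * D - D * A ∈ W ζ) ∧
    (∀ A ∈ W ζ, ∀ B ∈ What ζ,
      (A * B - B * A).IsDiag ∧ (A * B - B * A).trace = 0) :=
  conjugate_pair_center_general ζ
end

section
/- Each space W_ζ (the span of λ_{ij} over pairs with i XOR j = ζ, ζ nonzero) is an abelian subalgebra of matrices: any two elements of W_ζ commute. The same holds for Ŵ_ζ. -/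
/-!
If `i + j = k + l`, the unordered pairs `{i, j}` and `{k, l}` either coincide or are disjoint.
In the first case the generators `λ_{ij}`, `λ_{kl}` are equal up to sign; in the second both
products `λ_{ij} λ_{kl}` and `λ_{kl} λ_{ij}` vanish. So the generators of `W_ζ` (and of `Ŵ_ζ`) commute
pairwise, hence so does their span.
-/

open Matrix

theorem Submodule.commute_of_mem_span {R M : Type*} [CommSemiring R] [Semiring M] [Algebra R M]
    {s : Set M} (hs : ∀ a ∈ s, ∀ b ∈ s, Commute a b) {A B : M}
    (hA : A ∈ span R s) (hB : B ∈ span R s) : Commute A B := by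
  have hcomm := Algebra.isMulCommutative_adjoin R hs
  exact congrArg Subtype.val (hcomm.is_comm.comm
    (⟨A, Algebra.span_le_adjoin R s hA⟩ : Algebra.adjoin R s) ⟨B, Algebra.span_le_adjoin R s hB⟩)

theorem eq_and_eq_or_eq_and_eq_or_disjoint_of_add_eq_add {G : Type*} [AddCancelCommMonoid G]
    {i j k l : G} (h : i + j = k + l) :
    (i = k ∧ j = l) ∨ (i = l ∧ j = k) ∨ (i ≠ k ∧ i ≠ l ∧ j ≠ k ∧ j ≠ l) := by
  by_cases hik : i = k
  · subst hik
    exact .inl ⟨rfl, add_left_cancel h⟩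
  by_cases hil : i = l
  · subst hil
    exact .inr (.inl ⟨rfl, add_left_cancel (h.trans (add_comm k i))⟩)
  refine .inr (.inr ⟨hik, hil, fun hjk => hil ?_, fun hjl => hik ?_⟩)
  · subst hjk
    exact add_right_cancel (h.trans (add_comm j l))
  · subst hjl
    exact add_right_cancel h

theorem Matrix.single_add_single_mul_single_add_single_eq_zero {n α : Type*} [DecidableEq n]
    [Fintype n] [NonUnitalNonAssocSemiring α] {i j k l : n}
    (hik : i ≠ k) (hil : i ≠ l) (hjk : j ≠ k) (hjl : j ≠ l) (a b c d : α) :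
    (single i j a + single j i b) * (single k l c + single l k d) = 0 := by
  simp [add_mul, mul_add, single_mul_single_of_ne, hik, hil, hjk, hjl]

theorem Matrix.commute_single_add_single_of_disjoint {n α : Type*} [DecidableEq n]
    [Fintype n] [NonUnitalNonAssocSemiring α] {i j k l : n}
    (hik : i ≠ k) (hil : i ≠ l) (hjk : j ≠ k) (hjl : j ≠ l) (a b c d : α) :
    Commute (single i j a + single j i b) (single k l c + single l k d) := by
  show _ * _ = _ * _
  rw [single_add_single_mul_single_add_single_eq_zero hik hil hjk hjl,
    single_add_single_mul_single_add_single_eq_zero hik.symm hjk.symm hil.symm hjl.symm]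

section Generators

variable {p : ℕ}

theorem lam_swap (i j : Fin p → ZMod 2) : lam j i = lam i j :=
  add_comm _ _

theorem lamHat_swap (i j : Fin p → ZMod 2) : lamHat j i = -lamHat i j := by
  simp only [lamHat]
  module

theorem lamHat_eq_single_add_single (i j : Fin p → ZMod 2) :
    lamHat i j = single i j (-Complex.I) + single j i Complex.I := by
  simp only [lamHat, smul_single, smul_eq_mul, mul_one]

theorem commute_lam_lam {i j k l : Fin p → ZMod 2} (h : i + j = k + l) :
    Commute (lam i j) (lam k l) := by
  rcases eq_and_eq_or_eq_and_eq_or_disjoint_of_add_eq_add h with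
    ⟨rfl, rfl⟩ | ⟨rfl, rfl⟩ | ⟨hik, hil, hjk, hjl⟩
  · exact .refl _
  · rw [lam_swap]
  · exact commute_single_add_single_of_disjoint hik hil hjk hjl 1 1 1 1

theorem commute_lamHat_lamHat {i j k l : Fin p → ZMod 2} (h : i + j = k + l) :
    Commute (lamHat i j) (lamHat k l) := by
  rcases eq_and_eq_or_eq_and_eq_or_disjoint_of_add_eq_add h with
    ⟨rfl, rfl⟩ | ⟨rfl, rfl⟩ | ⟨hik, hil, hjk, hjl⟩
  · exact .refl _
  · rw [lamHat_swap]
    exact (Commute.refl _).neg_left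
  · rw [lamHat_eq_single_add_single, lamHat_eq_single_add_single]
    exact commute_single_add_single_of_disjoint hik hil hjk hjl _ _ _ _

end Generators

theorem W_abelian_general {p : ℕ} (ζ : Fin p → ZMod 2) :
    (∀ A ∈ W ζ, ∀ B ∈ W ζ, A * B = B * A) ∧
    (∀ A ∈ What ζ, ∀ B ∈ What ζ, A * B = B * A) := by
  constructor
  · refine fun A hA B hB => (Submodule.commute_of_mem_span ?_ hA hB).eq
    rintro _ ⟨i, j, hij, rfl⟩ _ ⟨k, l, hkl, rfl⟩
    exact commute_lam_lam (hij.trans hkl.symm)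
  · refine fun A hA B hB => (Submodule.commute_of_mem_span ?_ hA hB).eq
    rintro _ ⟨i, j, hij, rfl⟩ _ ⟨k, l, hkl, rfl⟩
    exact commute_lamHat_lamHat (hij.trans hkl.symm)

/-- Each `W_ζ` and each `Ŵ_ζ` (for nonzero `ζ`) is abelian: any two of its elements commute. -/
theorem W_abelian {p : ℕ} (ζ : Fin p → ZMod 2) (hζ : ζ ≠ 0) :
    (∀ A ∈ W ζ, ∀ B ∈ W ζ, A * B = B * A) ∧
    (∀ A ∈ What ζ, ∀ B ∈ What ζ, A * B = B * A) :=
  W_abelian_general ζ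
end
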